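/- arXiv:2305.07992 — 8 statements merged into one kernel-verified Lean document; each statement's English description precedes it below -/
import Mathlib

section
/- Let ℓ ≥ 1 and k ≥ 1 be integers. If λ₁ > 1 is a real root of x^ℓ - x^(ℓ-1) - 1 and λ₂ > 1 is a real root of x^(ℓ+k) - x^(ℓ+k-1) - 1, then λ₁ > λ₂. -/
/-! Writing `f(x) = x^(ℓ-1) (x - 1)`, which is strictly increasing on `[1, ∞)`, the two roots satisfy
`f(λ₁) = 1` and `λ₂^k f(λ₂) = 1`, so `f(λ₂) < f(λ₁)` and hence `λ₂ < λ₁`. -/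

open Set

theorem strictMonoOn_pow_mul_sub_one (n : ℕ) :
    StrictMonoOn (fun x : ℝ => x ^ n * (x - 1)) (Ici 1) := by
  intro a ha b hb hab
  have ha₀ : (0 : ℝ) ≤ a := zero_le_one.trans ha
  exact mul_lt_mul' (pow_le_pow_left₀ ha₀ hab.le n) (by linarith) (sub_nonneg.2 ha)
    (pow_pos (ha₀.trans_lt hab) n)

theorem pow_mul_sub_one_lt_of_lt {x : ℝ} (hx : 1 < x) {m n : ℕ} (hmn : m < n) :
    x ^ m * (x - 1) < x ^ n * (x - 1) :=
  mul_lt_mul_of_pos_right (pow_lt_pow_right₀ hx hmn) (sub_pos.2 hx)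

theorem pow_pred_mul_sub_one_eq_one {x : ℝ} {n : ℕ} (hn : n ≠ 0)
    (h : x ^ n - x ^ (n - 1) - 1 = 0) : x ^ (n - 1) * (x - 1) = 1 := by
  obtain ⟨m, rfl⟩ := Nat.exists_eq_add_one_of_ne_zero hn
  rw [Nat.add_sub_cancel] at h ⊢
  linear_combination h

/-- If λ₁ > 1 is a real root of x^ℓ - x^(ℓ-1) - 1 and λ₂ > 1 is a real root of
x^(ℓ+k) - x^(ℓ+k-1) - 1 (ℓ, k ≥ 1), then λ₁ > λ₂. -/
theorem root_lt_of_longer (ℓ k : ℕ) (hℓ : 1 ≤ ℓ) (hk : 1 ≤ k)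
    (lam₁ lam₂ : ℝ) (h₁ : 1 < lam₁) (h₂ : 1 < lam₂)
    (hr₁ : lam₁ ^ ℓ - lam₁ ^ (ℓ - 1) - 1 = 0)
    (hr₂ : lam₂ ^ (ℓ + k) - lam₂ ^ (ℓ + k - 1) - 1 = 0) :
    lam₁ > lam₂ := by
  have e₁ := pow_pred_mul_sub_one_eq_one (by omega) hr₁
  have e₂ := pow_pred_mul_sub_one_eq_one (by omega) hr₂
  have key : lam₂ ^ (ℓ - 1) * (lam₂ - 1) < lam₁ ^ (ℓ - 1) * (lam₁ - 1) :=
    calc lam₂ ^ (ℓ - 1) * (lam₂ - 1) < lam₂ ^ (ℓ + k - 1) * (lam₂ - 1) :=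
          pow_mul_sub_one_lt_of_lt h₂ (by omega)
      _ = lam₁ ^ (ℓ - 1) * (lam₁ - 1) := e₂.trans e₁.symm
  exact ((strictMonoOn_pow_mul_sub_one (ℓ - 1)).lt_iff_lt h₂.le h₁.le).1 key
end

section
/- Let ℓ ≥ 2 and let 1 ≤ p < p+k < ℓ be integers. If λ₁ > 1 is a real root of x^(ℓ+1) - x^ℓ - x^(ℓ-p+1) + x^(ℓ-p) - 1 and λ₂ > 1 is a real root of x^(ℓ+1) - x^ℓ - x^(ℓ-p-k+1) + x^(ℓ-p-k) - 1, then λ₁ > λ₂. -/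
/-!
Writing `ℓ = a + m`, the characteristic polynomial for period `m` is
`(x - 1) * x ^ a * (x ^ m - 1) - 1`. For `x ≥ 1` the product is monotone in `x`, and for fixed
`x > 1` and `ℓ` it strictly increases with `m`, since `x ^ ℓ - x ^ (ℓ - m)` does. So if `λ₁ ≤ λ₂`,
the product for period `p` at `λ₁` is strictly below the one for period `p + k` at `λ₂`,
while both equal `1`.
-/

lemma charPoly_period_eq {ℓ m : ℕ} (hm : m ≤ ℓ) (x : ℝ) :
    x ^ (ℓ + 1) - x ^ ℓ - x ^ (ℓ - m + 1) + x ^ (ℓ - m) - 1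
      = (x - 1) * (x ^ (ℓ - m) * (x ^ m - 1)) - 1 := by
  obtain ⟨a, rfl⟩ := Nat.exists_eq_add_of_le' hm
  rw [Nat.add_sub_cancel]
  ring

lemma sub_one_mul_pow_mul_pow_sub_one_le (a b : ℕ) {x y : ℝ} (hx : 1 ≤ x) (hxy : x ≤ y) :
    (x - 1) * (x ^ a * (x ^ b - 1)) ≤ (y - 1) * (y ^ a * (y ^ b - 1)) := by
  have hx₀ : 0 ≤ x := by linarith
  have hxb : 0 ≤ x ^ b - 1 := sub_nonneg.mpr (one_le_pow₀ hx)
  have hpow_a : x ^ a ≤ y ^ a := pow_le_pow_left₀ hx₀ hxy a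
  have hpow_b : x ^ b - 1 ≤ y ^ b - 1 := sub_le_sub_right (pow_le_pow_left₀ hx₀ hxy b) 1
  exact mul_le_mul (by linarith) (mul_le_mul hpow_a hpow_b hxb (pow_nonneg (by linarith) a))
    (mul_nonneg (by positivity) hxb) (by linarith)

lemma sub_one_mul_pow_mul_pow_sub_one_lt (a b : ℕ) {k : ℕ} (hk : 1 ≤ k) {x : ℝ} (hx : 1 < x) :
    (x - 1) * (x ^ (a + k) * (x ^ b - 1)) < (x - 1) * (x ^ a * (x ^ (b + k) - 1)) := by
  have hpow : x ^ a < x ^ (a + k) := pow_lt_pow_right₀ hx (by omega)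
  refine mul_lt_mul_of_pos_left ?_ (sub_pos.mpr hx)
  calc x ^ (a + k) * (x ^ b - 1) = x ^ (a + k + b) - x ^ (a + k) := by ring
    _ < x ^ (a + k + b) - x ^ a := by linarith
    _ = x ^ a * (x ^ (b + k) - 1) := by ring

theorem root_gt_of_smaller_period_general (ℓ p k : ℕ) (hk : 1 ≤ k)
    (hpk : p + k < ℓ)
    (lam₁ lam₂ : ℝ) (h₁ : 1 < lam₁) (h₂ : 1 < lam₂)
    (hr₁ : lam₁ ^ (ℓ + 1) - lam₁ ^ ℓ - lam₁ ^ (ℓ - p + 1) + lam₁ ^ (ℓ - p) - 1 = 0)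
    (hr₂ : lam₂ ^ (ℓ + 1) - lam₂ ^ ℓ - lam₂ ^ (ℓ - p - k + 1) + lam₂ ^ (ℓ - p - k) - 1 = 0) :
    lam₁ > lam₂ := by
  rw [charPoly_period_eq (by omega : p ≤ ℓ)] at hr₁
  rw [Nat.sub_sub, charPoly_period_eq hpk.le] at hr₂
  have hℓp : ℓ - p = ℓ - (p + k) + k := by omega
  by_contra! h
  refine lt_irrefl (1 : ℝ) ?_
  calc
    (1 : ℝ) = (lam₁ - 1) * (lam₁ ^ (ℓ - p) * (lam₁ ^ p - 1)) := (sub_eq_zero.mp hr₁).symm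
    _ ≤ (lam₂ - 1) * (lam₂ ^ (ℓ - (p + k) + k) * (lam₂ ^ p - 1)) :=
      hℓp ▸ sub_one_mul_pow_mul_pow_sub_one_le _ _ h₁.le h
    _ < (lam₂ - 1) * (lam₂ ^ (ℓ - (p + k)) * (lam₂ ^ (p + k) - 1)) :=
      sub_one_mul_pow_mul_pow_sub_one_lt _ _ hk h₂
    _ = 1 := sub_eq_zero.mp hr₂

/-- For ℓ ≥ 2 and 1 ≤ p < p+k < ℓ, roots > 1 of the characteristic polynomials of
periodic labels with periods p and p+k satisfy λ₁ > λ₂. -/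
theorem root_gt_of_smaller_period (ℓ p k : ℕ) (hℓ : 2 ≤ ℓ) (hp : 1 ≤ p) (hk : 1 ≤ k)
    (hpk : p + k < ℓ)
    (lam₁ lam₂ : ℝ) (h₁ : 1 < lam₁) (h₂ : 1 < lam₂)
    (hr₁ : lam₁ ^ (ℓ + 1) - lam₁ ^ ℓ - lam₁ ^ (ℓ - p + 1) + lam₁ ^ (ℓ - p) - 1 = 0)
    (hr₂ : lam₂ ^ (ℓ + 1) - lam₂ ^ ℓ - lam₂ ^ (ℓ - p - k + 1) + lam₂ ^ (ℓ - p - k) - 1 = 0) :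
    lam₁ > lam₂ :=
  root_gt_of_smaller_period_general ℓ p k hk hpk lam₁ lam₂ h₁ h₂ hr₁ hr₂
end

section
/- Let ℓ ≥ 2, 1 ≤ p < ℓ, and k ≥ 1 be integers. If λ₁ > 1 is a real root of x^(ℓ+1) - x^ℓ - x^(ℓ-p+1) + x^(ℓ-p) - 1 and λ₂ > 1 is a real root of x^(ℓ+k+1) - x^(ℓ+k) - x^(ℓ+k-p+1) + x^(ℓ+k-p) - 1, then λ₁ > λ₂. -/
/-!
Both characteristic equations are level sets of `f x = x ^ (ℓ - p) * (x ^ p - 1) * (x - 1)`, which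
is monotone on `[1, ∞)`: `f λ₁ = 1`, while `λ₂ ^ k * f λ₂ = 1` forces `f λ₂ < 1`, so `λ₂ < λ₁`.
-/

open Set

def labelPoly (m p : ℕ) (x : ℝ) : ℝ := x ^ m * (x ^ p - 1) * (x - 1)

theorem labelPoly_add (m k p : ℕ) (x : ℝ) :
    labelPoly (m + k) p x = x ^ k * labelPoly m p x := by
  unfold labelPoly; ring

theorem charPoly_eq_zero_iff_labelPoly_eq_one {n p : ℕ} (hpn : p ≤ n) (x : ℝ) :
    x ^ (n + 1) - x ^ n - x ^ (n - p + 1) + x ^ (n - p) - 1 = 0 ↔ labelPoly (n - p) p x = 1 := by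
  obtain ⟨m, rfl⟩ := Nat.exists_eq_add_of_le' hpn
  rw [Nat.add_sub_cancel, labelPoly]
  constructor <;> intro h <;> linear_combination h

theorem monotoneOn_labelPoly (m p : ℕ) : MonotoneOn (labelPoly m p) (Ici 1) := by
  intro x (hx : 1 ≤ x) y (hy : 1 ≤ y) hxy
  have hxp : 0 ≤ x ^ p - 1 := sub_nonneg.2 (one_le_pow₀ hx)
  have hyp : 0 ≤ y ^ p - 1 := sub_nonneg.2 (one_le_pow₀ hy)
  have hx1 : 0 ≤ x - 1 := sub_nonneg.2 hx
  unfold labelPoly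
  gcongr

theorem root_gt_of_shorter_periodic_general (ℓ p k : ℕ) (hpl : p < ℓ)
    (hk : 1 ≤ k)
    (lam₁ lam₂ : ℝ) (h₁ : 1 < lam₁) (h₂ : 1 < lam₂)
    (hr₁ : lam₁ ^ (ℓ + 1) - lam₁ ^ ℓ - lam₁ ^ (ℓ - p + 1) + lam₁ ^ (ℓ - p) - 1 = 0)
    (hr₂ : lam₂ ^ (ℓ + k + 1) - lam₂ ^ (ℓ + k) - lam₂ ^ (ℓ + k - p + 1) + lam₂ ^ (ℓ + k - p) - 1 = 0) :
    lam₁ > lam₂ := by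
  have e₁ : labelPoly (ℓ - p) p lam₁ = 1 :=
    (charPoly_eq_zero_iff_labelPoly_eq_one hpl.le lam₁).1 hr₁
  have e₂ : lam₂ ^ k * labelPoly (ℓ - p) p lam₂ = 1 := by
    rw [← labelPoly_add, ← show ℓ + k - p = ℓ - p + k by omega]
    exact (charPoly_eq_zero_iff_labelPoly_eq_one (by omega) lam₂).1 hr₂
  have hpow : 1 < lam₂ ^ k := one_lt_pow₀ h₂ (by omega)
  have hlt : labelPoly (ℓ - p) p lam₂ < labelPoly (ℓ - p) p lam₁ := by
    rw [e₁]; nlinarith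
  exact (monotoneOn_labelPoly (ℓ - p) p).reflect_lt (le_of_lt h₂) (le_of_lt h₁) hlt

/-- For ℓ ≥ 2, 1 ≤ p < ℓ, k ≥ 1: roots > 1 of the characteristic polynomials of
periodic labels of lengths ℓ and ℓ+k with the same period p satisfy λ₁ > λ₂. -/
theorem root_gt_of_shorter_periodic (ℓ p k : ℕ) (hℓ : 2 ≤ ℓ) (hp : 1 ≤ p) (hpl : p < ℓ)
    (hk : 1 ≤ k)
    (lam₁ lam₂ : ℝ) (h₁ : 1 < lam₁) (h₂ : 1 < lam₂)
    (hr₁ : lam₁ ^ (ℓ + 1) - lam₁ ^ ℓ - lam₁ ^ (ℓ - p + 1) + lam₁ ^ (ℓ - p) - 1 = 0)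
    (hr₂ : lam₂ ^ (ℓ + k + 1) - lam₂ ^ (ℓ + k) - lam₂ ^ (ℓ + k - p + 1) + lam₂ ^ (ℓ + k - p) - 1 = 0) :
    lam₁ > lam₂ :=
  root_gt_of_shorter_periodic_general ℓ p k hpl hk lam₁ lam₂ h₁ h₂ hr₁ hr₂
end

section
/- Let ℓ ≥ 2 and 1 ≤ r < r+k < ℓ be integers. If λ₁ > 1 is a real root of x^ℓ - x^(ℓ-1) - x^r + x^(r-1) - 1 and λ₂ > 1 is a real root of x^ℓ - x^(ℓ-1) - x^(r+k) + x^(r+k-1) - 1, then λ₂ > λ₁. -/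
/-!
Both characteristic polynomials have the form `(x - 1) * (x ^ (ℓ - 1) - x ^ (s - 1)) - 1`.
For `s = r` the product `(x - 1) * x ^ (r - 1) * (x ^ (ℓ - r) - 1)` is increasing on `[1, ∞)`,
while for fixed `x > 1` it strictly decreases in `s`. Hence the root `λ₂` for `s = r + k` makes the
product for `s = r` exceed `1`, the value it takes at `λ₁`, so `λ₂ > λ₁`.
-/

theorem pow_sub_pow_pred_sub_pow_add_pow_pred {R : Type*} [CommRing R] (x : R) {ℓ s : ℕ}
    (hℓ : 1 ≤ ℓ) (hs : 1 ≤ s) :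
    x ^ ℓ - x ^ (ℓ - 1) - x ^ s + x ^ (s - 1) = (x - 1) * (x ^ (ℓ - 1) - x ^ (s - 1)) := by
  obtain ⟨m, rfl⟩ := Nat.exists_eq_add_of_le' hℓ
  obtain ⟨n, rfl⟩ := Nat.exists_eq_add_of_le' hs
  simp only [Nat.add_sub_cancel]
  ring

theorem monotoneOn_sub_one_mul_pow_sub_pow {a b : ℕ} (hab : a ≤ b) :
    MonotoneOn (fun x : ℝ => (x - 1) * (x ^ b - x ^ a)) (Set.Ici 1) := by
  obtain ⟨d, rfl⟩ := Nat.exists_eq_add_of_le hab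
  intro x (hx : 1 ≤ x) y (hy : 1 ≤ y) hxy
  have factor (z : ℝ) : (z - 1) * (z ^ (a + d) - z ^ a) = (z - 1) * z ^ a * (z ^ d - 1) := by
    ring
  simp only [factor]
  have hxd : 0 ≤ x ^ d - 1 := sub_nonneg.2 (one_le_pow₀ hx)
  have hy₀ : 0 ≤ y - 1 := sub_nonneg.2 hy
  gcongr

theorem sub_one_mul_pow_sub_pow_lt {x : ℝ} (hx : 1 < x) (b : ℕ) {a c : ℕ} (hac : a < c) :
    (x - 1) * (x ^ b - x ^ c) < (x - 1) * (x ^ b - x ^ a) :=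
  mul_lt_mul_of_pos_left (sub_lt_sub_left (pow_lt_pow_right₀ hx hac) _) (sub_pos.2 hx)

theorem root_lt_of_larger_overlap_general (ℓ r k : ℕ) (hr : 1 ≤ r) (hk : 1 ≤ k)
    (hrk : r + k < ℓ)
    (lam₁ lam₂ : ℝ) (h₁ : 1 < lam₁) (h₂ : 1 < lam₂)
    (hr₁ : lam₁ ^ ℓ - lam₁ ^ (ℓ - 1) - lam₁ ^ r + lam₁ ^ (r - 1) - 1 = 0)
    (hr₂ : lam₂ ^ ℓ - lam₂ ^ (ℓ - 1) - lam₂ ^ (r + k) + lam₂ ^ (r + k - 1) - 1 = 0) :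
    lam₂ > lam₁ := by
  rw [pow_sub_pow_pred_sub_pow_add_pow_pred _ (by omega) hr, sub_eq_zero] at hr₁
  rw [pow_sub_pow_pred_sub_pow_add_pow_pred _ (by omega) (by omega), sub_eq_zero] at hr₂
  have hlt : (lam₁ - 1) * (lam₁ ^ (ℓ - 1) - lam₁ ^ (r - 1))
      < (lam₂ - 1) * (lam₂ ^ (ℓ - 1) - lam₂ ^ (r - 1)) := by
    calc _ = (lam₂ - 1) * (lam₂ ^ (ℓ - 1) - lam₂ ^ (r + k - 1)) := hr₁.trans hr₂.symm
      _ < _ := sub_one_mul_pow_sub_pow_lt h₂ _ (by omega)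
  exact (monotoneOn_sub_one_mul_pow_sub_pow (by omega)).reflect_lt h₁.le h₂.le hlt

/-- For ℓ ≥ 2 and 1 ≤ r < r+k < ℓ: roots > 1 of the characteristic polynomials for
cyclic overlaps r and r+k satisfy λ₂ > λ₁. -/
theorem root_lt_of_larger_overlap (ℓ r k : ℕ) (hℓ : 2 ≤ ℓ) (hr : 1 ≤ r) (hk : 1 ≤ k)
    (hrk : r + k < ℓ)
    (lam₁ lam₂ : ℝ) (h₁ : 1 < lam₁) (h₂ : 1 < lam₂)
    (hr₁ : lam₁ ^ ℓ - lam₁ ^ (ℓ - 1) - lam₁ ^ r + lam₁ ^ (r - 1) - 1 = 0)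
    (hr₂ : lam₂ ^ ℓ - lam₂ ^ (ℓ - 1) - lam₂ ^ (r + k) + lam₂ ^ (r + k - 1) - 1 = 0) :
    lam₂ > lam₁ :=
  root_lt_of_larger_overlap_general ℓ r k hr hk hrk lam₁ lam₂ h₁ h₂ hr₁ hr₂
end

section
/- Let ℓ ≥ 2 and 1 ≤ p < ℓ. If λ₁ > 1 is a real root of q(x) = x^ℓ - x^(ℓ-1) - 1 and λ₂ > 1 is a real root of p(x) = x^(ℓ+1) - x^ℓ - x^(ℓ-p+1) + x^(ℓ-p) - 1, then λ₂ > λ₁. -/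
/-!
Writing `q x = x ^ ℓ - x ^ (ℓ - 1) - 1` and `k = ℓ - p`, the periodic polynomial is
`x * q x + (1 - x ^ k) * (x - 1)`. For `x > 1` the second summand is negative, so a root
`λ₂ > 1` of the periodic polynomial has `q λ₂ > 0 = q λ₁`; since `q = x ^ (ℓ - 1) * (x - 1) - 1`
is strictly increasing on `[1, ∞)`, this forces `λ₂ > λ₁`.
-/

theorem periodic_eq_mul_noncyclic_add {R : Type*} [CommRing R] (x : R) (n k : ℕ) :
    x ^ (n + 2) - x ^ (n + 1) - x ^ (k + 1) + x ^ k - 1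
      = x * (x ^ (n + 1) - x ^ n - 1) + (1 - x ^ k) * (x - 1) := by
  ring

section OrderedRing

variable {R : Type*} [CommRing R] [LinearOrder R] [IsStrictOrderedRing R]

theorem strictMonoOn_pow_succ_sub_pow_sub_one (n : ℕ) :
    StrictMonoOn (fun x : R => x ^ (n + 1) - x ^ n - 1) (Set.Ici 1) := by
  intro x hx y hy hxy
  have hpow : x ^ n ≤ y ^ n := pow_le_pow_left₀ (zero_le_one.trans hx) hxy.le n
  have hy_pos : 0 < y ^ n := pow_pos (zero_lt_one.trans_le hy) n
  show x ^ (n + 1) - x ^ n - 1 < y ^ (n + 1) - y ^ n - 1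
  calc x ^ (n + 1) - x ^ n - 1 = x ^ n * (x - 1) - 1 := by ring
    _ ≤ y ^ n * (x - 1) - 1 := by
        gcongr
        exact sub_nonneg.mpr hx
    _ < y ^ n * (y - 1) - 1 := by gcongr
    _ = y ^ (n + 1) - y ^ n - 1 := by ring

theorem noncyclic_pos_of_periodic_eq_zero {x : R} (hx : 1 < x) (n : ℕ) {k : ℕ} (hk : k ≠ 0)
    (h : x ^ (n + 2) - x ^ (n + 1) - x ^ (k + 1) + x ^ k - 1 = 0) :
    0 < x ^ (n + 1) - x ^ n - 1 := by
  rw [periodic_eq_mul_noncyclic_add] at h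
  have hxk : 1 < x ^ k := one_lt_pow₀ hx hk
  have hneg : (1 - x ^ k) * (x - 1) < 0 :=
    mul_neg_of_neg_of_pos (sub_neg.mpr hxk) (sub_pos.mpr hx)
  have hprod : 0 < x * (x ^ (n + 1) - x ^ n - 1) := by linarith
  exact pos_of_mul_pos_right hprod (zero_le_one.trans hx.le)

end OrderedRing

theorem periodic_root_gt_noncyclic_root_general (ℓ p : ℕ) (hpl : p < ℓ)
    (lam₁ lam₂ : ℝ) (h₁ : 1 < lam₁) (h₂ : 1 < lam₂)
    (hr₁ : lam₁ ^ ℓ - lam₁ ^ (ℓ - 1) - 1 = 0)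
    (hr₂ : lam₂ ^ (ℓ + 1) - lam₂ ^ ℓ - lam₂ ^ (ℓ - p + 1) + lam₂ ^ (ℓ - p) - 1 = 0) :
    lam₂ > lam₁ := by
  obtain ⟨n, rfl⟩ : ∃ n, ℓ = n + 1 := ⟨ℓ - 1, by omega⟩
  have hq₂ : 0 < lam₂ ^ (n + 1) - lam₂ ^ n - 1 :=
    noncyclic_pos_of_periodic_eq_zero h₂ n (by omega) hr₂
  rw [Nat.add_sub_cancel] at hr₁
  exact (strictMonoOn_pow_succ_sub_pow_sub_one n).lt_iff_lt
    (Set.mem_Ici.mpr h₁.le) (Set.mem_Ici.mpr h₂.le) |>.mp (hr₁.trans_lt hq₂)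

/-- For ℓ ≥ 2 and 1 ≤ p < ℓ: a root λ₂ > 1 of x^(ℓ+1) - x^ℓ - x^(ℓ-p+1) + x^(ℓ-p) - 1
exceeds a root λ₁ > 1 of x^ℓ - x^(ℓ-1) - 1. -/
theorem periodic_root_gt_noncyclic_root (ℓ p : ℕ) (hℓ : 2 ≤ ℓ) (hp : 1 ≤ p) (hpl : p < ℓ)
    (lam₁ lam₂ : ℝ) (h₁ : 1 < lam₁) (h₂ : 1 < lam₂)
    (hr₁ : lam₁ ^ ℓ - lam₁ ^ (ℓ - 1) - 1 = 0)
    (hr₂ : lam₂ ^ (ℓ + 1) - lam₂ ^ ℓ - lam₂ ^ (ℓ - p + 1) + lam₂ ^ (ℓ - p) - 1 = 0) :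
    lam₂ > lam₁ :=
  periodic_root_gt_noncyclic_root_general ℓ p hpl lam₁ lam₂ h₁ h₂ hr₁ hr₂
end

section
/- Call a finite directed graph (loops allowed) path unique if for every k ≥ 1 and every ordered pair of vertices (u,v) there is at most one directed walk of length k from u to v. Then a path unique graph on n vertices has at most (n+1)²/4 edges if n is odd and at most n(n+2)/4 edges if n is even. -/
/-- `f : Fin (k+1) → V` is a directed walk of length `k` in the directed graph
with edge set `E` (loops allowed). -/
def IsWalk {V : Type*} (E : Finset (V × V)) (k : ℕ) (f : Fin (k + 1) → V) : Prop :=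
  ∀ i : Fin k, (f i.castSucc, f i.succ) ∈ E

/-- A directed graph is path unique if for every k ≥ 1 and every ordered pair of
vertices there is at most one directed walk of length k between them. -/
def PathUnique {V : Type*} (E : Finset (V × V)) : Prop :=
  ∀ k : ℕ, 1 ≤ k → ∀ f g : Fin (k + 1) → V, IsWalk E k f → IsWalk E k g →
    f 0 = g 0 → f (Fin.last k) = g (Fin.last k) → f = g

/-!
Induction on the number `n` of vertices. If every vertex has an out-neighbour, the number of
walks of length `k ≥ 1` from a vertex `v` is nondecreasing in `k`, and by path uniqueness it equals
the number of their endpoints, so it is bounded by `n`. Where it stops growing, every endpoint has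
out-degree one; hence every out-degree is at most the number `z` of vertices of out-degree one, and
there are at most `z (n - z + 1) ≤ (n + 1)² / 4` edges. Reversing all edges treats graphs without
sources the same way. Otherwise there are a source `u` and a sink `w`. A walk `u → x → w` is unique,
so the out-neighbours of `u` and the in-neighbours of `w` share at most one vertex, one of the two
degrees is at most `(n + 1) / 2`, and deleting that vertex gives the bound by induction, since
`(n + 1) / 2 + n² / 4 = (n + 1)² / 4`.
-/

open Finset

namespace Nat

theorem succ_div_two_add_sq_div_four (a : ℕ) : (a + 1) / 2 + a ^ 2 / 4 = (a + 1) ^ 2 / 4 := by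
  obtain ⟨b, rfl | rfl⟩ := a.even_or_odd'
  · rw [show (2 * b) ^ 2 = 4 * (b * b) by ring, show (2 * b + 1) ^ 2 = 4 * (b * b + b) + 1 by ring]
    omega
  · rw [show (2 * b + 1) ^ 2 = 4 * (b * b + b) + 1 by ring,
      show (2 * b + 1 + 1) ^ 2 = 4 * (b * b + 2 * b + 1) by ring]
    omega

theorem succ_sq_div_four_of_even {n : ℕ} (hn : Even n) : (n + 1) ^ 2 / 4 = n * (n + 2) / 4 := by
  obtain ⟨b, rfl⟩ := hn
  rw [show (b + b + 1) ^ 2 = 4 * (b * b + b) + 1 by ring,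
    show (b + b) * (b + b + 2) = 4 * (b * b + b) by ring]
  omega

theorem mul_succ_le_sq_div_four (x y : ℕ) : x * (y + 1) ≤ (x + y + 1) ^ 2 / 4 := by
  rw [Nat.le_div_iff_mul_le four_pos, add_assoc, mul_comm, ← mul_assoc]
  exact four_mul_le_sq_add x (y + 1)

theorem exists_succ_eq_of_monotone_of_le {s : ℕ → ℕ} (hs : Monotone s) {B : ℕ}
    (hB : ∀ n, s n ≤ B) : ∃ n, s (n + 1) = s n := by
  by_contra! h
  have hlt : StrictMono s := strictMono_nat_of_lt_succ fun n => (hs n.le_succ).lt_of_ne (h n).symm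
  exact (hB (B + 1)).not_gt (Nat.lt_succ_self B |>.trans_le (hlt.id_le (B + 1)))

end Nat

section

variable {V : Type*} {E : Finset (V × V)}

theorem isWalk_succ_iff {k : ℕ} {f : Fin (k + 2) → V} :
    IsWalk E (k + 1) f ↔
      IsWalk E k (Fin.init f) ∧ (f (Fin.last k).castSucc, f (Fin.last (k + 1))) ∈ E := by
  simp only [IsWalk, Fin.forall_fin_succ', Fin.init, Fin.succ_last, Fin.succ_castSucc]

theorem IsWalk.mono {F : Finset (V × V)} (hFE : F ⊆ E) {k : ℕ} {f : Fin (k + 1) → V}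
    (h : IsWalk F k f) : IsWalk E k f :=
  fun i => hFE (h i)

instance [DecidableEq V] (E : Finset (V × V)) (k : ℕ) : DecidablePred (IsWalk E k) :=
  fun _ => inferInstanceAs (Decidable (∀ _ : Fin k, _))

def reverseEdges (E : Finset (V × V)) : Finset (V × V) := E.map (Equiv.prodComm V V).toEmbedding

@[simp]
theorem mem_reverseEdges {a b : V} : (a, b) ∈ reverseEdges E ↔ (b, a) ∈ E := by
  simp [reverseEdges]

@[simp]
theorem card_reverseEdges : #(reverseEdges E) = #E := card_map _

@[simp]
theorem reverseEdges_reverseEdges : reverseEdges (reverseEdges E) = E := by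
  ext ⟨a, b⟩
  simp

theorem reverseEdges_subset_product {A : Finset V} (hA : E ⊆ A ×ˢ A) :
    reverseEdges E ⊆ A ×ˢ A := by
  rintro ⟨a, b⟩ hab
  simpa [and_comm] using hA (mem_reverseEdges.1 hab)

theorem IsWalk.comp_rev {k : ℕ} {f : Fin (k + 1) → V} (h : IsWalk (reverseEdges E) k f) :
    IsWalk E k (f ∘ Fin.rev) := by
  intro i
  simpa [Fin.rev_succ, Fin.rev_castSucc] using h i.rev

theorem PathUnique.mono {F : Finset (V × V)} (hE : PathUnique E) (hFE : F ⊆ E) : PathUnique F :=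
  fun k hk f g hf hg => hE k hk f g (hf.mono hFE) (hg.mono hFE)

theorem PathUnique.reverse (hE : PathUnique E) : PathUnique (reverseEdges E) := by
  intro k hk f g hf hg h0 hlast
  have hrev := hE k hk _ _ hf.comp_rev hg.comp_rev (by simpa using hlast) (by simpa using h0)
  funext i
  simpa using congrFun hrev i.rev

variable [Fintype V] [DecidableEq V]

variable (E) in
def outNbrs (v : V) : Finset V := {b | (v, b) ∈ E}

variable (E) in
def walksFrom (k : ℕ) (v : V) : Finset (Fin (k + 1) → V) := {f | IsWalk E k f ∧ f 0 = v}

@[simp]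
theorem mem_outNbrs {v b : V} : b ∈ outNbrs E v ↔ (v, b) ∈ E := by simp [outNbrs]

@[simp]
theorem mem_walksFrom {k : ℕ} {v : V} {f : Fin (k + 1) → V} :
    f ∈ walksFrom E k v ↔ IsWalk E k f ∧ f 0 = v := by simp [walksFrom]

theorem outNbrs_subset {A : Finset V} (hA : E ⊆ A ×ˢ A) (v : V) : outNbrs E v ⊆ A :=
  fun _ hb => (mem_product.1 (hA (mem_outNbrs.1 hb))).2

theorem walksFrom_zero (v : V) : walksFrom E 0 v = {fun _ => v} := by
  ext f
  simp only [mem_walksFrom, mem_singleton, funext_iff]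
  exact ⟨fun h i => by rw [Fin.fin_one_eq_zero i, h.2], fun h => ⟨fun i => i.elim0, h 0⟩⟩

theorem card_walksFrom_succ (k : ℕ) (v : V) :
    #(walksFrom E (k + 1) v) = ∑ f ∈ walksFrom E k v, #(outNbrs E (f (Fin.last k))) := by
  rw [← card_sigma]
  refine card_nbij' (fun f => ⟨Fin.init f, f (Fin.last (k + 1))⟩)
    (fun p => Fin.snoc p.1 p.2) ?_ ?_ ?_ ?_
  · intro f hf
    simp_all [isWalk_succ_iff, Fin.init]
  · rintro ⟨f, b⟩ h
    simp_all [isWalk_succ_iff]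
  · intro f _
    simp
  · rintro ⟨f, b⟩ _
    simp

theorem card_filter_fst_eq (v : V) : #{e ∈ E | e.1 = v} = #(outNbrs E v) := by
  refine card_nbij' Prod.snd (Prod.mk v) ?_ ?_ ?_ ?_
  all_goals intro e; aesop

theorem card_eq_sum_card_outNbrs {A : Finset V} (hA : E ⊆ A ×ˢ A) :
    #E = ∑ v ∈ A, #(outNbrs E v) := by
  rw [card_eq_sum_card_fiberwise fun e he => (mem_product.1 (hA he)).1]
  exact sum_congr rfl fun v _ => card_filter_fst_eq v

theorem card_eq_card_outNbrs_add_card_filter (u : V) :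
    #E = #(outNbrs E u) + #{e ∈ E | e.1 ≠ u} := by
  rw [← card_filter_fst_eq, card_filter_add_card_filter_not]

theorem filter_fst_ne_subset_product_erase {A : Finset V} (hA : E ⊆ A ×ˢ A) {u : V}
    (hu : outNbrs (reverseEdges E) u = ∅) : {e ∈ E | e.1 ≠ u} ⊆ A.erase u ×ˢ A.erase u := by
  rintro ⟨a, b⟩ hab
  simp only [mem_filter] at hab
  have hb : b ≠ u := by
    rintro rfl
    simpa [hu] using (mem_outNbrs (E := reverseEdges E)).2 (mem_reverseEdges.2 hab.1)
  simpa [hab.2, hb] using hA hab.1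

theorem PathUnique.injOn_last (hE : PathUnique E) (k : ℕ) (v : V) :
    Set.InjOn (fun f : Fin (k + 2) → V => f (Fin.last (k + 1))) (walksFrom E (k + 1) v) := by
  intro f hf g hg hfg
  simp only [mem_coe, mem_walksFrom] at hf hg
  exact hE (k + 1) k.succ_pos f g hf.1 hg.1 (hf.2.trans hg.2.symm) hfg

theorem PathUnique.card_outNbrs_inter_le_one (hE : PathUnique E) (u w : V) :
    #(outNbrs E u ∩ outNbrs (reverseEdges E) w) ≤ 1 := by
  refine card_le_one.mpr fun x hx y hy => ?_
  have walk {z : V} (hz : z ∈ outNbrs E u ∩ outNbrs (reverseEdges E) w) :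
      IsWalk E 2 ![u, z, w] := by
    simp only [mem_inter, mem_outNbrs, mem_reverseEdges] at hz
    intro i
    fin_cases i <;> simp [hz]
  simpa using congrFun (hE 2 one_le_two _ _ (walk hx) (walk hy) rfl rfl) 1

theorem PathUnique.card_outNbrs_le (hE : PathUnique E) {A : Finset V} (hA : E ⊆ A ×ˢ A)
    (hne : ∀ v ∈ A, (outNbrs E v).Nonempty) (v : V) :
    #(outNbrs E v) ≤ #{u ∈ A | #(outNbrs E u) = 1} := by
  set T : ℕ → ℕ := fun n => #(walksFrom E (n + 1) v)
  have last_mem (n : ℕ) : Set.MapsTo (fun f : Fin (n + 2) → V => f (Fin.last (n + 1)))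
      (walksFrom E (n + 1) v) A := by
    intro f hf
    have last_edge := (mem_walksFrom.1 hf).1 (Fin.last n)
    rw [Fin.succ_last] at last_edge
    exact (mem_product.1 (hA last_edge)).2
  have one_le {n : ℕ} {f} (hf : f ∈ walksFrom E (n + 1) v) :
      1 ≤ #(outNbrs E (f (Fin.last (n + 1)))) :=
    card_pos.2 (hne _ (last_mem n hf))
  have mono : Monotone T := monotone_nat_of_le_succ fun n => by
    simp only [T, card_walksFrom_succ (n + 1), card_eq_sum_ones (walksFrom E (n + 1) v)]
    exact sum_le_sum fun f hf => one_le hf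
  obtain ⟨n, hn⟩ := Nat.exists_succ_eq_of_monotone_of_le mono
    fun n => card_le_card_of_injOn _ (last_mem n) (hE.injOn_last n v)
  have deg_one : ∀ f ∈ walksFrom E (n + 1) v, #(outNbrs E (f (Fin.last (n + 1)))) = 1 := by
    simp only [T, card_walksFrom_succ (n + 1), card_eq_sum_ones (walksFrom E (n + 1) v)] at hn
    exact fun f hf => ((sum_eq_sum_iff_of_le fun f hf => one_le hf).1 hn.symm f hf).symm
  calc #(outNbrs E v) = T 0 := by simp [T, card_walksFrom_succ 0, walksFrom_zero]
    _ ≤ T n := mono n.zero_le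
    _ ≤ #{u ∈ A | #(outNbrs E u) = 1} :=
      card_le_card_of_injOn _ (fun f hf => mem_filter.2 ⟨last_mem n hf, deg_one f hf⟩)
        (hE.injOn_last n v)

theorem PathUnique.card_le_of_forall_outNbrs_nonempty (hE : PathUnique E) {A : Finset V}
    (hA : E ⊆ A ×ˢ A) (hne : ∀ v ∈ A, (outNbrs E v).Nonempty) : #E ≤ (#A + 1) ^ 2 / 4 := by
  set Z := {u ∈ A | #(outNbrs E u) = 1}
  set N := {u ∈ A | ¬#(outNbrs E u) = 1}
  have sum_Z : ∑ v ∈ Z, #(outNbrs E v) = #Z := by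
    rw [card_eq_sum_ones]
    exact sum_congr rfl fun v hv => (mem_filter.1 hv).2
  have sum_N : ∑ v ∈ N, #(outNbrs E v) ≤ #N * #Z := by
    simpa using sum_le_card_nsmul N _ #Z fun v _ => hE.card_outNbrs_le hA hne v
  calc #E = ∑ v ∈ Z, #(outNbrs E v) + ∑ v ∈ N, #(outNbrs E v) := by
        rw [card_eq_sum_card_outNbrs hA, sum_filter_add_sum_filter_not]
    _ ≤ #Z * (#N + 1) := by rw [sum_Z, mul_add_one, mul_comm]; omega
    _ ≤ (#A + 1) ^ 2 / 4 := by
        rw [← card_filter_add_card_filter_not (s := A) (fun u => #(outNbrs E u) = 1)]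
        exact Nat.mul_succ_le_sq_div_four _ _

theorem PathUnique.card_le_of_subset_product (hE : PathUnique E) {A : Finset V}
    (hA : E ⊆ A ×ˢ A) : #E ≤ (#A + 1) ^ 2 / 4 := by
  induction A using Finset.strongInduction generalizing E with
  | H A ih =>
  have remove_source (F : Finset (V × V)) (hF : PathUnique F) (hFA : F ⊆ A ×ˢ A) {u : V}
      (hu : u ∈ A) (hsrc : outNbrs (reverseEdges F) u = ∅)
      (hdeg : #(outNbrs F u) ≤ (#A + 1) / 2) : #F ≤ (#A + 1) ^ 2 / 4 := by
    have hrest := ih _ (erase_ssubset hu) (hF.mono (filter_subset _ F))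
      (filter_fst_ne_subset_product_erase hFA hsrc)
    rw [card_erase_add_one hu] at hrest
    calc #F = #(outNbrs F u) + #{e ∈ F | e.1 ≠ u} := card_eq_card_outNbrs_add_card_filter u
      _ ≤ (#A + 1) / 2 + #A ^ 2 / 4 := add_le_add hdeg hrest
      _ = (#A + 1) ^ 2 / 4 := Nat.succ_div_two_add_sq_div_four _
  by_cases no_sink : ∀ v ∈ A, (outNbrs E v).Nonempty
  · exact hE.card_le_of_forall_outNbrs_nonempty hA no_sink
  by_cases no_source : ∀ v ∈ A, (outNbrs (reverseEdges E) v).Nonempty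
  · simpa using hE.reverse.card_le_of_forall_outNbrs_nonempty (reverseEdges_subset_product hA)
      no_source
  push Not at no_sink no_source
  obtain ⟨w, hw, hw_sink⟩ := no_sink
  obtain ⟨u, hu, hu_source⟩ := no_source
  have hdeg : #(outNbrs E u) + #(outNbrs (reverseEdges E) w) ≤ #A + 1 := by
    rw [← card_union_add_card_inter]
    exact add_le_add (card_le_card (union_subset (outNbrs_subset hA u)
      (outNbrs_subset (reverseEdges_subset_product hA) w))) (hE.card_outNbrs_inter_le_one u w)
  by_cases hu_deg : #(outNbrs E u) ≤ (#A + 1) / 2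
  · exact remove_source E hE hA hu hu_source hu_deg
  · simpa using remove_source _ hE.reverse (reverseEdges_subset_product hA) hw
      (by simpa using hw_sink) (by omega)

end

/-- A path unique graph on n vertices has at most (n+1)²/4 edges if n is odd and
at most n(n+2)/4 edges if n is even. -/
theorem pathUnique_card_le {V : Type*} [Fintype V] (E : Finset (V × V))
    (h : PathUnique E) :
    E.card ≤ if Odd (Fintype.card V) then (Fintype.card V + 1) ^ 2 / 4
             else Fintype.card V * (Fintype.card V + 2) / 4 := by
  classical
  have hbound := h.card_le_of_subset_product (A := univ) (by simp)
  rw [card_univ] at hbound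
  split_ifs with hodd
  · exact hbound
  · rwa [← Nat.succ_sq_div_four_of_even (Nat.not_odd_iff_even.1 hodd)]
end

section
/- For every n ≥ 1 there exists a path unique directed graph (loops allowed) on n vertices with exactly (n+1)²/4 edges if n is odd, and exactly n(n+2)/4 edges if n is even. -/
/-!
Fix a centre `c` of an ordered vertex set and take as edges all pairs `(u, v)` with
`u ≤ c ≤ v`. The middle vertex of any walk of length two is then both `≤ c` and `≥ c`, so every
interior vertex of every walk is `c`: a walk is determined by its length and its endpoints. With
`c = ⌊(n - 1) / 2⌋` in `Fin n` there are `(c + 1) (n - c)` edges, which is the claimed count.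
-/

section Centre

variable {V : Type*} {E : Finset (V × V)} {c : V}

theorem IsWalk.apply_eq_of_pos_of_lt (hmid : ∀ u v w, (u, v) ∈ E → (v, w) ∈ E → v = c)
    {k : ℕ} {f : Fin (k + 1) → V} (hf : IsWalk E k f) {i : ℕ} (hi₀ : 0 < i) (hik : i < k) :
    f ⟨i, by omega⟩ = c := by
  have hin := hf ⟨i - 1, by omega⟩
  have hout := hf ⟨i, hik⟩
  have hsucc : (⟨i - 1, by omega⟩ : Fin k).succ = ⟨i, by omega⟩ := Fin.ext (by simp only [Fin.val_succ]; omega)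
  rw [hsucc] at hin
  exact hmid _ _ _ hin hout

theorem pathUnique_of_forall_mid_eq (hmid : ∀ u v w, (u, v) ∈ E → (v, w) ∈ E → v = c) :
    PathUnique E := by
  intro k _ f g hf hg h₀ hk
  funext ⟨i, hi⟩
  rcases Nat.eq_zero_or_pos i with rfl | hi₀
  · exact h₀
  rcases (Nat.lt_succ_iff.mp hi).lt_or_eq with hik | rfl
  · rw [hf.apply_eq_of_pos_of_lt hmid hi₀ hik, hg.apply_eq_of_pos_of_lt hmid hi₀ hik]
  · exact hk

end Centre

theorem pathUnique_Iic_product_Ici {V : Type*} [PartialOrder V] [LocallyFiniteOrderBot V]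
    [LocallyFiniteOrderTop V] (c : V) : PathUnique (Finset.Iic c ×ˢ Finset.Ici c) :=
  pathUnique_of_forall_mid_eq (c := c) fun _ _ _ huv hvw => by
    simp only [Finset.mem_product, Finset.mem_Iic, Finset.mem_Ici] at huv hvw
    exact le_antisymm hvw.1 huv.2

theorem Fin.card_Iic_product_Ici {n : ℕ} (c : Fin n) :
    (Finset.Iic c ×ˢ Finset.Ici c).card = (c + 1) * (n - c) := by
  rw [Finset.card_product, Fin.card_Iic, Fin.card_Ici]

theorem Nat.half_succ_mul_sub_half (n : ℕ) :
    ((n - 1) / 2 + 1) * (n - (n - 1) / 2) =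
      if Odd n then (n + 1) ^ 2 / 4 else n * (n + 2) / 4 := by
  rcases Nat.even_or_odd' n with ⟨t, rfl | rfl⟩
  · rw [if_neg (Nat.not_odd_iff_even.mpr (even_two_mul t))]
    rcases t with _ | t
    · rfl
    rw [show (2 * (t + 1) - 1) / 2 = t by omega, show 2 * (t + 1) - t = t + 2 by omega,
      show 2 * (t + 1) * (2 * (t + 1) + 2) = 4 * ((t + 1) * (t + 2)) by ring,
      Nat.mul_div_cancel_left _ four_pos]
  · rw [if_pos (odd_two_mul_add_one t), show (2 * t + 1 - 1) / 2 = t by omega,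
      show 2 * t + 1 - t = t + 1 by omega,
      show (2 * t + 1 + 1) ^ 2 = 4 * ((t + 1) * (t + 1)) by ring, Nat.mul_div_cancel_left _ four_pos]

/-- For every n ≥ 1 there is a path unique directed graph on n vertices with
exactly (n+1)²/4 edges if n is odd, and exactly n(n+2)/4 edges if n is even. -/
theorem exists_extremal_pathUnique (n : ℕ) (hn : 1 ≤ n) :
    ∃ E : Finset (Fin n × Fin n), PathUnique E ∧
      E.card = if Odd n then (n + 1) ^ 2 / 4 else n * (n + 2) / 4 := by
  let c : Fin n := ⟨(n - 1) / 2, by omega⟩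
  exact ⟨_, pathUnique_Iic_product_Ici c,
    (Fin.card_Iic_product_Ici c).trans (Nat.half_succ_mul_sub_half n)⟩
end

section
/- Let A be the (ℓ+1)×(ℓ+1) matrix (indices 0..ℓ) with A(0,0)=1, A(i,i+1)=1 for 0 ≤ i ≤ ℓ-1, A(ℓ,0)=1, A(ℓ,ℓ-p+1)=1, and all other entries 0, where 1 ≤ p < ℓ. Then its characteristic polynomial equals x^(ℓ+1) - x^ℓ - x^(ℓ-p+1) + x^(ℓ-p) - 1 (up to sign). -/
/-!
The characteristic matrix `X • 1 - A` has `X - 1, X, …, X` on the diagonal and `-1` on the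
superdiagonal in its first `ℓ` rows, and last row `X eₗ - e₀ - e_{ℓ-p+1}`. For any matrix of this
shape, with diagonal `d` and last row `r`, expanding along the first column gives the recursion
`det = r₀ + d₀ · det'`, where `det'` is the determinant of the same shape with `d, r` shifted by one
(the other minor is triangular with diagonal `-1`). Hence `det = ∑ⱼ rⱼ d₀ ⋯ d_{j-1}`, and with
`d₀ ⋯ d_{j-1} = (X - 1) X^{j-1}` the three terms of the last row give the stated polynomial.
-/

open Polynomial Finset Matrix

namespace Matrix

variable {R : Type*} [CommRing R]

def bidiagonalWithLastRow (n : ℕ) (d r : ℕ → R) : Matrix (Fin (n + 1)) (Fin (n + 1)) R :=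
  of fun i j => if (i : ℕ) = n then r j else if (j : ℕ) = i then d i
    else if (j : ℕ) = i + 1 then -1 else 0

theorem det_bidiagonalWithLastRow_submatrix_castSucc_succ (n : ℕ) (d r : ℕ → R) :
    ((bidiagonalWithLastRow (n + 1) d r).submatrix Fin.castSucc Fin.succ).det =
      (-1) ^ (n + 1) := by
  have hrow (i : Fin (n + 1)) : (i : ℕ) ≠ n + 1 := i.is_lt.ne
  rw [det_of_isLowerTriangular]
  · simp [bidiagonalWithLastRow, hrow]
  · intro i j hij
    have hij : (i : ℕ) < j := hij
    simp [bidiagonalWithLastRow, hrow, hij.ne', show (j : ℕ) + 1 ≠ i by omega]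

theorem det_bidiagonalWithLastRow (n : ℕ) (d r : ℕ → R) :
    (bidiagonalWithLastRow n d r).det = ∑ j ∈ range (n + 1), r j * ∏ i ∈ range j, d i := by
  induction n generalizing d r with
  | zero => simp [bidiagonalWithLastRow]
  | succ n ih =>
    have hminor : (bidiagonalWithLastRow (n + 1) d r).submatrix Fin.succ Fin.succ =
        bidiagonalWithLastRow n (fun i => d (i + 1)) (fun j => r (j + 1)) := by
      ext i j
      simp [bidiagonalWithLastRow]
    have hcol (i : Fin n) : bidiagonalWithLastRow (n + 1) d r i.castSucc.succ 0 = 0 := by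
      simp [bidiagonalWithLastRow, i.is_lt.ne]
    have hsign : (-1 : R) ^ (n + 1) * r 0 * (-1) ^ (n + 1) = r 0 := by
      rw [mul_right_comm, ← mul_pow, neg_one_mul, neg_neg, one_pow, one_mul]
    rw [det_succ_column_zero, Fin.sum_univ_succ, Fin.sum_univ_castSucc,
      sum_eq_zero fun i _ => by rw [hcol, mul_zero, zero_mul], Fin.succAbove_zero, Fin.succ_last,
      Fin.succAbove_last, hminor, ih, det_bidiagonalWithLastRow_submatrix_castSucc_succ,
      sum_range_succ' _ (n + 1)]
    simp only [bidiagonalWithLastRow, of_apply, Fin.val_zero, Fin.val_last, pow_zero, one_mul,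
      Nat.right_eq_add, Nat.add_eq_zero_iff, one_ne_zero, and_false, ↓reduceIte, hsign, zero_add,
      mul_sum, prod_range_succ', range_zero, prod_empty, mul_one, add_left_inj]
    exact sum_congr rfl fun j _ => by ring

end Matrix

/-- The characteristic polynomial of the (ℓ+1)×(ℓ+1) adjacency matrix of the
constraint graph of a periodic label of length ℓ with non-cyclic period p is
x^(ℓ+1) - x^ℓ - x^(ℓ-p+1) + x^(ℓ-p) - 1. -/
theorem charpoly_periodic_label (ℓ p : ℕ) (hp : 1 ≤ p) (hpl : p < ℓ)
    (A : Matrix (Fin (ℓ + 1)) (Fin (ℓ + 1)) ℚ)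
    (hA : ∀ i j : Fin (ℓ + 1), A i j =
      if (i = 0 ∧ j = 0) ∨ (j.val = i.val + 1) ∨ (i.val = ℓ ∧ j = 0) ∨
         (i.val = ℓ ∧ j.val = ℓ - p + 1) then 1 else 0) :
    Matrix.charpoly A = X ^ (ℓ + 1) - X ^ ℓ - X ^ (ℓ - p + 1) + X ^ (ℓ - p) - 1 := by
  set d : ℕ → ℚ[X] := fun i => if i = 0 then X - 1 else X
  have hd (k : ℕ) : ∏ i ∈ range (k + 1), d i = (X - 1) * X ^ k := by
    simp [d, prod_range_succ', mul_comm]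
  have hM : charmatrix A = bidiagonalWithLastRow ℓ d fun j =>
      (if j = ℓ then X else 0) - (if j = 0 then 1 else 0) - (if j = ℓ - p + 1 then 1 else 0) := by
    ext i j
    rw [charmatrix_apply, hA]
    simp only [bidiagonalWithLastRow, of_apply, diagonal_apply, Fin.ext_iff, Fin.val_zero, d]
    split_ifs <;> first | omega | simp
  obtain ⟨m, rfl⟩ : ∃ m, ℓ = m + 1 := ⟨ℓ - 1, by omega⟩
  rw [charpoly, hM, det_bidiagonalWithLastRow]
  simp only [sub_mul, ite_mul, zero_mul, one_mul, sum_sub_distrib, sum_ite_eq', mem_range]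
  rw [if_pos (by omega), if_pos (by omega), if_pos (by omega), range_zero, prod_empty,
    Nat.sub_add_comm (by omega), hd, hd]
  ring
end
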